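/- Let d ∈ ℕ^I be nonzero and θ ∈ ℝ^I. Then there exists an integral weight ω ∈ ℤ^I with the following properties: (1) any object M of 𝒜 with φ(M) = d is θ-semistable (resp. θ-stable, θ-polystable) if and only if it is ω-semistable (resp. ω-stable, ω-polystable); (2) if M is a θ-semistable object with φ(M) = d, then every Jordan–Hölder filtration of M with respect to θ is a Jordan–Hölder filtration of M with respect to ω, and conversely; (3) two θ-semistable objects M, N with φ(M) = φ(N) = d are S_θ-equivalent if and only if they are S_ω-equivalent. -/

import Mathlib

open CategoryTheory CategoryTheory.Limits

attribute [local instance] CategoryTheory.Limits.HasFiniteBiproducts.of_hasFiniteProducts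

variable {𝒜 : Type*} [Category 𝒜] [Abelian 𝒜] {I : Type*} [Fintype I]

/-- The `θ`-degree of an object `M`: `deg_θ(M) = ∑ i, θ i * φ i M`. -/
noncomputable def degTheta (φ : I → 𝒜 → ℤ) (θ : I → ℝ) (M : 𝒜) : ℝ :=
  ∑ i, θ i * (φ i M : ℝ)

/-- The rank of an object `M`: `rk(M) = ∑ i, φ i M`. -/
def rkPhi (φ : I → 𝒜 → ℤ) (M : 𝒜) : ℤ := ∑ i, φ i M

/-- The `θ`-slope of an object `M`: `μ_θ(M) = deg_θ(M) / rk(M)`. -/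
noncomputable def muSlope (φ : I → 𝒜 → ℤ) (θ : I → ℝ) (M : 𝒜) : ℝ :=
  degTheta φ θ M / (rkPhi φ M : ℝ)

/-- The family `φ` is additive on short exact sequences. -/
def IsAdditiveFamily (φ : I → 𝒜 → ℤ) : Prop :=
  ∀ i, ∀ S : ShortComplex 𝒜, S.ShortExact → φ i S.X₂ = φ i S.X₁ + φ i S.X₃

/-- The family `φ` is positive. -/
def IsPositiveFamily (φ : I → 𝒜 → ℤ) : Prop :=
  (∀ i, ∀ M : 𝒜, 0 ≤ φ i M) ∧ ∀ M : 𝒜, ¬ IsZero M → ∃ i, 0 < φ i M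

/-- `M` is `θ`-semistable: it is nonzero and every nonzero proper subobject has
slope at most that of `M`. -/
noncomputable def Semistable (φ : I → 𝒜 → ℤ) (θ : I → ℝ) (M : 𝒜) : Prop :=
  ¬ IsZero M ∧ ∀ N : Subobject M, N ≠ ⊥ → N ≠ ⊤ →
    muSlope φ θ ((N : 𝒜)) ≤ muSlope φ θ M

/-- `M` is `θ`-stable. -/
noncomputable def Stable (φ : I → 𝒜 → ℤ) (θ : I → ℝ) (M : 𝒜) : Prop :=
  ¬ IsZero M ∧ ∀ N : Subobject M, N ≠ ⊥ → N ≠ ⊤ →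
    muSlope φ θ ((N : 𝒜)) < muSlope φ θ M


/-- The slope `μ_θ(d)` of a dimension vector `d ∈ ℕ^I`. -/
noncomputable def muSlopeVec (θ : I → ℝ) (d : I → ℕ) : ℝ :=
  (∑ i, θ i * (d i : ℝ)) / (∑ i, (d i : ℝ))

/-- `M` has dimension vector `d`, i.e. `φ i M = d i` for all `i`. -/
def HasDimVec (φ : I → 𝒜 → ℤ) (M : 𝒜) (d : I → ℕ) : Prop :=
  ∀ i, φ i M = (d i : ℤ)

/-- `e ∈ S_d`: `e ∈ ℕ^I \ ℚd` and there exist an object `M` with `φ(M) = d` and a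
subobject `N` of `M` with `φ(N) = e`. -/
def MemSd (φ : I → 𝒜 → ℤ) (d e : I → ℕ) : Prop :=
  (¬ ∃ q : ℚ, ∀ i, (e i : ℚ) = q * (d i : ℚ)) ∧
  ∃ (M : 𝒜) (N : Subobject M), HasDimVec φ M d ∧ HasDimVec φ ((N : 𝒜)) e

/-- `θ` and `ω` lie in the same facet of the hyperplane arrangement `ℋ(d)`:
`sgn (f(d,e)(θ)) = sgn (f(d,e)(ω))` for every `e ∈ S_d`. -/
def SameFacet (φ : I → 𝒜 → ℤ) (d : I → ℕ) (θ ω : I → ℝ) : Prop :=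
  ∀ e : I → ℕ, MemSd φ d e →
    Real.sign (muSlopeVec θ d - muSlopeVec θ e) =
      Real.sign (muSlopeVec ω d - muSlopeVec ω e)

/-- The quotient object `M_{i-1}/M_i` of a decreasing chain of subobjects. -/
noncomputable def quotObj {M : 𝒜} {n : ℕ} (F : Fin (n + 1) → Subobject M)
    (hmono : ∀ i : Fin n, F i.succ ≤ F i.castSucc) (i : Fin n) : 𝒜 :=
  cokernel (Subobject.ofLE (F i.succ) (F i.castSucc) (hmono i))

/-- `(F i)` is a Jordan–Hölder filtration of `M` with respect to `θ`:
`n ≥ 1`, `F 0 = M`, `F n = 0`, each `F (i+1)` is a proper subobject of `F i`, each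
successive quotient is `θ`-stable, and `μ_θ(F i) = μ_θ(M)` for `i = 0, …, n−1`. -/
noncomputable def IsJHFiltration (φ : I → 𝒜 → ℤ) (θ : I → ℝ) {M : 𝒜} {n : ℕ}
    (F : Fin (n + 1) → Subobject M)
    (hmono : ∀ i : Fin n, F i.succ ≤ F i.castSucc) : Prop :=
  1 ≤ n ∧ F 0 = ⊤ ∧ F (Fin.last n) = ⊥ ∧
  (∀ i : Fin n, F i.succ ≠ F i.castSucc) ∧
  (∀ i : Fin n, Stable φ θ (quotObj F hmono i)) ∧
  (∀ i : Fin n, muSlope φ θ (((F i.castSucc) : 𝒜)) = muSlope φ θ M)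

/-- `M` is `θ`-polystable: `θ`-semistable and isomorphic to a finite direct sum of
`θ`-stable objects. -/
noncomputable def Polystable (φ : I → 𝒜 → ℤ) (θ : I → ℝ) (M : 𝒜) : Prop :=
  Semistable φ θ M ∧
  ∃ (n : ℕ) (X : Fin n → 𝒜), (∀ i, Stable φ θ (X i)) ∧ Nonempty (M ≅ ⨁ X)

/-- `M` and `N` are `S_θ`-equivalent. -/
noncomputable def SEquiv (φ : I → 𝒜 → ℤ) (θ : I → ℝ) (M N : 𝒜) : Prop :=
  ∃ (n : ℕ) (F : Fin (n + 1) → Subobject M)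
    (hF : ∀ i : Fin n, F i.succ ≤ F i.castSucc)
    (G : Fin (n + 1) → Subobject N)
    (hG : ∀ i : Fin n, G i.succ ≤ G i.castSucc)
    (π : Equiv.Perm (Fin n)),
    IsJHFiltration φ θ F hF ∧ IsJHFiltration φ θ G hG ∧
    ∀ i : Fin n, Nonempty (quotObj F hF i ≅ quotObj G hG (π i))

/-! Only finitely many dimension vectors lie below `d`, and each comparison of `μ_θ(e)` with
`μ_θ(f)` among them is the sign of a linear form in `θ` with rational coefficients. Writing
`θ = A b` with `A` rational and `b` linearly independent over `ℚ`, such a form composed with `A`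
vanishes at `b` only if it vanishes identically; so the signs of all these forms are locally
constant near `b`, and a rational approximation of `b`, with denominators cleared, yields an
integral `ω` inducing the same comparisons. Every slope entering the statement (of subobjects,
successive quotients of filtrations, direct summands) is that of a dimension vector below `d`. -/

open Filter Topology Matrix

theorem exists_linearIndependent_rat_mulVec_eq (θ : I → ℝ) :
    ∃ (m : ℕ) (a : Matrix I (Fin m) ℚ) (b : Fin m → ℝ),
      LinearIndependent ℚ b ∧ a.map (↑) *ᵥ b = θ := by
  let V := Submodule.span ℚ (Set.range θ)
  have : FiniteDimensional ℚ V := FiniteDimensional.span_of_finite ℚ (Set.finite_range θ)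
  let B := Module.finBasis ℚ V
  have hθ (i : I) : θ i ∈ V := Submodule.subset_span ⟨i, rfl⟩
  refine ⟨_, fun i j => B.repr ⟨θ i, hθ i⟩ j, fun j => B j,
    B.linearIndependent.map' V.subtype V.ker_subtype, funext fun i => ?_⟩
  conv_rhs => rw [← Subtype.coe_mk (θ i) (hθ i), ← B.sum_repr ⟨θ i, hθ i⟩]
  simp only [Submodule.coe_sum, Submodule.coe_smul, Rat.smul_def]
  rfl

theorem eventually_sign_dotProduct_eq {J : Type*} [Fintype J] (ℓ : J → ℚ) {b : J → ℝ}
    (hb : LinearIndependent ℚ b) :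
    ∀ᶠ t in 𝓝 b, SignType.sign ((↑) ∘ ℓ ⬝ᵥ t) = SignType.sign ((↑) ∘ ℓ ⬝ᵥ b) := by
  by_cases hℓ : ℓ = 0
  · simp [hℓ]
  have hne : (↑) ∘ ℓ ⬝ᵥ b ≠ 0 := fun h => hℓ <| funext <|
    Fintype.linearIndependent_iff.1 hb ℓ (by simpa [dotProduct, Rat.smul_def] using h)
  have hcont : ContinuousAt (fun t => SignType.sign ((↑) ∘ ℓ ⬝ᵥ t)) b :=
    (continuousAt_sign_of_ne_zero hne).comp
      (continuous_const.dotProduct continuous_id).continuousAt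
  rw [ContinuousAt, nhds_discrete SignType] at hcont
  exact tendsto_pure.1 hcont

theorem exists_rat_sign_mulVec_eq {K : Type*} [Finite K] (c : Matrix K I ℚ)
    (θ : I → ℝ) :
    ∃ ω : I → ℚ, ∀ k, SignType.sign ((c.map (↑) *ᵥ θ) k) =
      SignType.sign ((c.map (↑) *ᵥ (fun i => (ω i : ℝ))) k) := by
  obtain ⟨m, a, b, hb, rfl⟩ := exists_linearIndependent_rat_mulVec_eq θ
  have hnear : ∀ᶠ t in 𝓝 b, ∀ k, SignType.sign (((c * a).map (↑) *ᵥ t) k) =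
      SignType.sign (((c * a).map (↑) *ᵥ b) k) :=
    eventually_all.2 fun k => eventually_sign_dotProduct_eq _ hb
  have hdense : DenseRange (Pi.map fun (_ : Fin m) (q : ℚ) => (q : ℝ)) :=
    .piMap fun _ => Rat.denseRange_cast
  obtain ⟨_, ⟨t, rfl⟩, ht⟩ :=
    ((mem_closure_iff_frequently.1 (hdense b)).and_eventually hnear).exists
  refine ⟨a *ᵥ t, fun k => ?_⟩
  have hcast : (fun i => ((a *ᵥ t) i : ℝ)) = a.map (↑) *ᵥ fun j => (t j : ℝ) :=
    funext (RingHom.map_mulVec (Rat.castHom ℝ) a t)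
  have hmap : (c * a).map ((↑) : ℚ → ℝ) = c.map (↑) * a.map (↑) :=
    Matrix.map_mul (f := Rat.castHom ℝ)
  rw [hmap] at ht
  rw [hcast, mulVec_mulVec, mulVec_mulVec]
  exact (ht k).symm

theorem exists_pos_nat_mul_eq_intCast (ω : I → ℚ) :
    ∃ N : ℕ, 0 < N ∧ ∃ z : I → ℤ, ∀ i, (z i : ℚ) = N * ω i := by
  refine ⟨∏ i, (ω i).den, Finset.prod_pos fun i _ => (ω i).pos,
    fun i => ((∏ j, (ω j).den) / (ω i).den : ℕ) * (ω i).num, fun i => ?_⟩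
  have hdvd : (ω i).den ∣ ∏ j, (ω j).den := Finset.dvd_prod_of_mem _ (Finset.mem_univ i)
  rw [Int.cast_mul, Int.cast_natCast, Nat.cast_div hdvd (by positivity), ← Rat.mul_den_eq_num]
  field_simp

theorem exists_int_sign_mulVec_eq {K : Type*} [Finite K] (c : Matrix K I ℚ)
    (θ : I → ℝ) :
    ∃ ω : I → ℤ, ∀ k, SignType.sign ((c.map (↑) *ᵥ θ) k) =
      SignType.sign ((c.map (↑) *ᵥ (fun i => (ω i : ℝ))) k) := by
  obtain ⟨ω, hω⟩ := exists_rat_sign_mulVec_eq c θ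
  obtain ⟨N, hN, z, hz⟩ := exists_pos_nat_mul_eq_intCast ω
  have hscale : (fun i => (z i : ℝ)) = (N : ℝ) • fun i => (ω i : ℝ) := funext fun i => by
    simpa using congrArg ((↑) : ℚ → ℝ) (hz i)
  refine ⟨z, fun k => ?_⟩
  rw [hω, hscale, mulVec_smul, Pi.smul_apply, smul_eq_mul, sign_mul,
    sign_pos (show (0 : ℝ) < N by positivity), one_mul]

def slopeForm (e : I → ℕ) : I → ℚ := fun i => e i / ∑ j, (e j : ℚ)

theorem muSlopeVec_eq_dotProduct (x : I → ℝ) (e : I → ℕ) :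
    muSlopeVec x e = (fun i => (slopeForm e i : ℝ)) ⬝ᵥ x := by
  simp only [muSlopeVec, slopeForm, dotProduct, Finset.sum_div]
  push_cast
  exact Finset.sum_congr rfl fun i _ => by ring

def SameSlopeOrder (d : I → ℕ) (θ ω : I → ℝ) : Prop :=
  ∀ e ≤ d, ∀ f ≤ d, SignType.sign (muSlopeVec θ e - muSlopeVec θ f) =
    SignType.sign (muSlopeVec ω e - muSlopeVec ω f)

theorem exists_int_sameSlopeOrder (d : I → ℕ) (θ : I → ℝ) :
    ∃ ω : I → ℤ, SameSlopeOrder d θ fun i => (ω i : ℝ) := by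
  classical
  have : Finite (Set.Iic d) := (Set.finite_Iic d).to_subtype
  let c : Matrix (Set.Iic d × Set.Iic d) I ℚ := fun k => slopeForm k.1.1 - slopeForm k.2.1
  have hc (x : I → ℝ) (k : Set.Iic d × Set.Iic d) :
      (c.map (↑) *ᵥ x) k = muSlopeVec x k.1 - muSlopeVec x k.2 := by
    rw [muSlopeVec_eq_dotProduct, muSlopeVec_eq_dotProduct, ← sub_dotProduct]
    exact congrArg (· ⬝ᵥ x) (funext fun i => Rat.cast_sub _ _)
  obtain ⟨ω, hω⟩ := exists_int_sign_mulVec_eq c θ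
  exact ⟨ω, fun e he f hf => by simpa only [hc] using hω (⟨e, he⟩, ⟨f, hf⟩)⟩

theorem le_iff_le_of_sign_sub_eq {α : Type*} [AddCommGroup α] [LinearOrder α]
    [IsOrderedAddMonoid α] {a b a' b' : α}
    (h : SignType.sign (a - b) = SignType.sign (a' - b')) : a ≤ b ↔ a' ≤ b' := by
  rw [← sub_nonpos, ← sign_nonpos_iff, h, sign_nonpos_iff, sub_nonpos]

theorem lt_iff_lt_of_sign_sub_eq {α : Type*} [AddCommGroup α] [LinearOrder α]
    [IsOrderedAddMonoid α] {a b a' b' : α}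
    (h : SignType.sign (a - b) = SignType.sign (a' - b')) : a < b ↔ a' < b' := by
  rw [← sub_neg, ← sign_eq_neg_one_iff, h, sign_eq_neg_one_iff, sub_neg]

theorem eq_iff_eq_of_sign_sub_eq {α : Type*} [AddCommGroup α] [LinearOrder α]
    [IsOrderedAddMonoid α] {a b a' b' : α}
    (h : SignType.sign (a - b) = SignType.sign (a' - b')) : a = b ↔ a' = b' := by
  rw [← sub_eq_zero, ← sign_eq_zero_iff, h, sign_eq_zero_iff, sub_eq_zero]

section Transfer

variable {φ : I → 𝒜 → ℤ} {d : I → ℕ} {θ ω : I → ℝ}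

/-- For a positive family `toNat` loses nothing (see `muSlope_eq_muSlopeVec_dimVec`). -/
def dimVec (φ : I → 𝒜 → ℤ) (M : 𝒜) : I → ℕ := fun i => (φ i M).toNat

omit [Fintype I] in
theorem dimVec_le_of_mono (hadd : IsAdditiveFamily φ) (hpos : IsPositiveFamily φ) {X Y : 𝒜}
    (f : X ⟶ Y) [Mono f] : dimVec φ X ≤ dimVec φ Y := fun i => Int.toNat_le_toNat <| by
  rw [hadd i (.mk f (cokernel.π f) (cokernel.condition f))
    ⟨ShortComplex.exact_of_g_is_cokernel _ (cokernelIsCokernel f)⟩]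
  exact le_add_of_nonneg_right (hpos.1 i _)

omit [Fintype I] in
theorem dimVec_le_of_epi (hadd : IsAdditiveFamily φ) (hpos : IsPositiveFamily φ) {X Y : 𝒜}
    (g : X ⟶ Y) [Epi g] : dimVec φ Y ≤ dimVec φ X := fun i => Int.toNat_le_toNat <| by
  rw [hadd i (.mk (kernel.ι g) g (kernel.condition g))
    ⟨ShortComplex.exact_of_f_is_kernel _ (kernelIsKernel g)⟩]
  exact le_add_of_nonneg_left (hpos.1 i _)

omit [Abelian 𝒜] in
theorem muSlope_eq_muSlopeVec_dimVec (hpos : IsPositiveFamily φ) (x : I → ℝ) (M : 𝒜) :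
    muSlope φ x M = muSlopeVec x (dimVec φ M) := by
  have hcast (i : I) : ((dimVec φ M i : ℕ) : ℝ) = φ i M := by
    exact_mod_cast Int.toNat_of_nonneg (hpos.1 i M)
  simp only [muSlope, degTheta, rkPhi, muSlopeVec, hcast, Int.cast_sum]

namespace SameSlopeOrder

omit [Abelian 𝒜] in
theorem sign_muSlope_sub_eq (H : SameSlopeOrder d θ ω) (hpos : IsPositiveFamily φ) {X Y : 𝒜}
    (hX : dimVec φ X ≤ d) (hY : dimVec φ Y ≤ d) :
    SignType.sign (muSlope φ θ X - muSlope φ θ Y) =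
      SignType.sign (muSlope φ ω X - muSlope φ ω Y) := by
  simp only [muSlope_eq_muSlopeVec_dimVec hpos]
  exact H _ hX _ hY

theorem semistable_iff (H : SameSlopeOrder d θ ω) (hadd : IsAdditiveFamily φ)
    (hpos : IsPositiveFamily φ) {M : 𝒜} (hM : dimVec φ M ≤ d) :
    Semistable φ θ M ↔ Semistable φ ω M :=
  and_congr_right' <| forall₃_congr fun N _ _ => le_iff_le_of_sign_sub_eq <|
    H.sign_muSlope_sub_eq hpos ((dimVec_le_of_mono hadd hpos N.arrow).trans hM) hM

theorem stable_iff (H : SameSlopeOrder d θ ω) (hadd : IsAdditiveFamily φ)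
    (hpos : IsPositiveFamily φ) {M : 𝒜} (hM : dimVec φ M ≤ d) :
    Stable φ θ M ↔ Stable φ ω M :=
  and_congr_right' <| forall₃_congr fun N _ _ => lt_iff_lt_of_sign_sub_eq <|
    H.sign_muSlope_sub_eq hpos ((dimVec_le_of_mono hadd hpos N.arrow).trans hM) hM

theorem polystable_iff (H : SameSlopeOrder d θ ω) (hadd : IsAdditiveFamily φ)
    (hpos : IsPositiveFamily φ) {M : 𝒜} (hM : dimVec φ M ≤ d) :
    Polystable φ θ M ↔ Polystable φ ω M := by
  refine and_congr (H.semistable_iff hadd hpos hM) <| exists_congr fun n => exists_congr fun X =>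
    and_congr_left fun ⟨e⟩ => forall_congr' fun b => H.stable_iff hadd hpos ?_
  exact (dimVec_le_of_mono hadd hpos (biproduct.ι X b ≫ e.inv)).trans hM

theorem isJHFiltration_iff (H : SameSlopeOrder d θ ω) (hadd : IsAdditiveFamily φ)
    (hpos : IsPositiveFamily φ) {M : 𝒜} (hM : dimVec φ M ≤ d) {n : ℕ}
    (F : Fin (n + 1) → Subobject M) (hmono : ∀ i : Fin n, F i.succ ≤ F i.castSucc) :
    IsJHFiltration φ θ F hmono ↔ IsJHFiltration φ ω F hmono := by
  have hF (i : Fin n) : dimVec φ (F i.castSucc : 𝒜) ≤ d :=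
    (dimVec_le_of_mono hadd hpos (F i.castSucc).arrow).trans hM
  refine and_congr_right' <| and_congr_right' <| and_congr_right' <| and_congr_right' <|
    and_congr (forall_congr' fun i => H.stable_iff hadd hpos ?_)
      (forall_congr' fun i => eq_iff_eq_of_sign_sub_eq (H.sign_muSlope_sub_eq hpos (hF i) hM))
  exact (dimVec_le_of_epi hadd hpos (cokernel.π _)).trans (hF i)

theorem sEquiv_iff (H : SameSlopeOrder d θ ω) (hadd : IsAdditiveFamily φ)
    (hpos : IsPositiveFamily φ) {M N : 𝒜} (hM : dimVec φ M ≤ d) (hN : dimVec φ N ≤ d) :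
    SEquiv φ θ M N ↔ SEquiv φ ω M N := by
  refine exists_congr fun n => exists_congr fun F => exists_congr fun hF => exists_congr fun G =>
    exists_congr fun hG => exists_congr fun π => ?_
  rw [H.isJHFiltration_iff hadd hpos hM, H.isJHFiltration_iff hadd hpos hN]

end SameSlopeOrder

end Transfer

theorem exists_integral_weight_equivalent_general
    (φ : I → 𝒜 → ℤ) (hadd : IsAdditiveFamily φ) (hpos : IsPositiveFamily φ)
    (d : I → ℕ) (θ : I → ℝ) :
    ∃ ω : I → ℤ,
      (∀ M : 𝒜, HasDimVec φ M d →
        ((Semistable φ θ M ↔ Semistable φ (fun i => (ω i : ℝ)) M) ∧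
         (Stable φ θ M ↔ Stable φ (fun i => (ω i : ℝ)) M) ∧
         (Polystable φ θ M ↔ Polystable φ (fun i => (ω i : ℝ)) M))) ∧
      (∀ M : 𝒜, HasDimVec φ M d → Semistable φ θ M →
        ∀ (n : ℕ) (F : Fin (n + 1) → Subobject M)
          (hmono : ∀ i : Fin n, F i.succ ≤ F i.castSucc),
          (IsJHFiltration φ θ F hmono ↔
            IsJHFiltration φ (fun i => (ω i : ℝ)) F hmono)) ∧
      (∀ M N : 𝒜, HasDimVec φ M d → HasDimVec φ N d →
        Semistable φ θ M → Semistable φ θ N →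
        (SEquiv φ θ M N ↔ SEquiv φ (fun i => (ω i : ℝ)) M N)) := by
  obtain ⟨ω, H⟩ := exists_int_sameSlopeOrder d θ
  have hdim {M : 𝒜} (hM : HasDimVec φ M d) : dimVec φ M ≤ d := fun i => by simp [dimVec, hM i]
  refine ⟨ω, fun M hM => ⟨?_, ?_, ?_⟩, fun M hM _ n F hF => ?_, fun M N hM hN _ _ => ?_⟩
  · exact H.semistable_iff hadd hpos (hdim hM)
  · exact H.stable_iff hadd hpos (hdim hM)
  · exact H.polystable_iff hadd hpos (hdim hM)
  · exact H.isJHFiltration_iff hadd hpos (hdim hM) F hF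
  · exact H.sEquiv_iff hadd hpos (hdim hM) (hdim hN)

/-- for every nonzero `d ∈ ℕ^I` and `θ ∈ ℝ^I` there is an integral weight
`ω ∈ ℤ^I` such that (1) objects of dimension vector `d` are `θ`-semistable
(resp. `θ`-stable, `θ`-polystable) iff they are `ω`-semistable (resp. `ω`-stable,
`ω`-polystable); (2) Jordan–Hölder filtrations with respect to `θ` and `ω` coincide for
`θ`-semistable objects of dimension vector `d`; and (3) `S_θ`-equivalence coincides with
`S_ω`-equivalence for such objects. -/
theorem exists_integral_weight_equivalent [Nonempty I]
    (φ : I → 𝒜 → ℤ) (hadd : IsAdditiveFamily φ) (hpos : IsPositiveFamily φ)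
    (d : I → ℕ) (hd : d ≠ 0) (θ : I → ℝ) :
    ∃ ω : I → ℤ,
      (∀ M : 𝒜, HasDimVec φ M d →
        ((Semistable φ θ M ↔ Semistable φ (fun i => (ω i : ℝ)) M) ∧
         (Stable φ θ M ↔ Stable φ (fun i => (ω i : ℝ)) M) ∧
         (Polystable φ θ M ↔ Polystable φ (fun i => (ω i : ℝ)) M))) ∧
      (∀ M : 𝒜, HasDimVec φ M d → Semistable φ θ M →
        ∀ (n : ℕ) (F : Fin (n + 1) → Subobject M)
          (hmono : ∀ i : Fin n, F i.succ ≤ F i.castSucc),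
          (IsJHFiltration φ θ F hmono ↔
            IsJHFiltration φ (fun i => (ω i : ℝ)) F hmono)) ∧
      (∀ M N : 𝒜, HasDimVec φ M d → HasDimVec φ N d →
        Semistable φ θ M → Semistable φ θ N →
        (SEquiv φ θ M N ↔ SEquiv φ (fun i => (ω i : ℝ)) M N)) :=
  exists_integral_weight_equivalent_general φ hadd hpos d θ
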